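/- Let f : 𝕆 → 𝕆 be left para-linear (ℝ-linear with Re(f(px) − p f(x)) = 0 for all p, x). Then its second associator is expressed by associators of octonions: f(px) − p f(x) = Σ_{i=1}^{7} eᵢ · Re f([eᵢ, p, x]) for all p, x ∈ 𝕆, where [a,b,c] = (ab)c − a(bc). -/

import Mathlib

/-!
An imaginary octonion `z` is recovered from the real parts `re (eᵢ z) = -zᵢ`. For
`z = f(px) - p f(x)`, para-linearity turns `re (eᵢ f(px))` and `re (eᵢ (p f(x))) = re ((eᵢ p) f(x))`
into `re f(eᵢ(px))` and `re f((eᵢ p)x)`; the difference is `re f([eᵢ, p, x])`. The only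
octonionic input is that `re ((ab)c) = re (a(bc))`.
-/

noncomputable section

open Quaternion

/-- The octonions, as the Cayley–Dickson double of the quaternions. -/
def Octo : Type := ℍ × ℍ

namespace Octo

instance : AddCommGroup Octo := inferInstanceAs (AddCommGroup (ℍ × ℍ))
instance : Module ℝ Octo := inferInstanceAs (Module ℝ (ℍ × ℍ))

/-- Cayley–Dickson multiplication: (a,b)(c,d) = (ac − d̄b, da + bc̄). -/
instance : Mul Octo :=
  ⟨fun x y => ((x.1 * y.1 - star y.2 * x.2, y.2 * x.1 + x.2 * star y.1) : ℍ × ℍ)⟩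

/-- Octonionic conjugation. -/
def conj (x : Octo) : Octo := ((star x.1, -x.2) : ℍ × ℍ)

/-- Real part. -/
def re (x : Octo) : ℝ := x.1.re

/-- Squared norm. -/
def normSq (x : Octo) : ℝ := re (x * conj x)

/-- The standard basis e₀ = 1, e₁, …, e₇. -/
def e : Fin 8 → Octo :=
  ![((1, 0) : ℍ × ℍ), ((⟨0,1,0,0⟩, 0) : ℍ × ℍ), ((⟨0,0,1,0⟩, 0) : ℍ × ℍ),
    ((⟨0,0,0,1⟩, 0) : ℍ × ℍ), ((0, 1) : ℍ × ℍ), ((0, ⟨0,1,0,0⟩) : ℍ × ℍ),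
    ((0, ⟨0,0,1,0⟩) : ℍ × ℍ), ((0, ⟨0,0,0,1⟩) : ℍ × ℍ)]

/-- Inverse: p⁻¹ = conj p / |p|². -/
def inv (x : Octo) : Octo := (normSq x)⁻¹ • conj x

/-- The associator [a,b,c] = (ab)c − a(bc). -/
def assoc (a b c : Octo) : Octo := a * b * c - a * (b * c)

/-- Left para-linear map: ℝ-linear with Re(f(px) − p f(x)) = 0. -/
def IsParaLinear (f : Octo → Octo) : Prop :=
  IsLinearMap ℝ f ∧ ∀ p x : Octo, re (f (p * x) - p * f x) = 0

end Octo


namespace Octo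

lemma mul_fst (x y : Octo) : (x * y).1 = x.1 * y.1 - star y.2 * x.2 := rfl
lemma mul_snd (x y : Octo) : (x * y).2 = y.2 * x.1 + x.2 * star y.1 := rfl
lemma add_fst (x y : Octo) : (x + y).1 = x.1 + y.1 := rfl
lemma add_snd (x y : Octo) : (x + y).2 = x.2 + y.2 := rfl
lemma sub_fst (x y : Octo) : (x - y).1 = x.1 - y.1 := rfl
lemma sub_snd (x y : Octo) : (x - y).2 = x.2 - y.2 := rfl
lemma smul_fst (r : ℝ) (x : Octo) : (r • x).1 = r • x.1 := rfl
lemma smul_snd (r : ℝ) (x : Octo) : (r • x).2 = r • x.2 := rfl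

lemma re_sub (x y : Octo) : re (x - y) = re x - re y :=
  Quaternion.re_sub _ _

lemma re_mul_sub (a x y : Octo) : re (a * (x - y)) = re (a * x) - re (a * y) := by
  simp only [re, mul_fst, sub_fst, sub_snd, mul_sub, star_sub, sub_mul, Quaternion.re_sub]
  ring

lemma re_mul_assoc (a b c : Octo) : re (a * b * c) = re (a * (b * c)) := by
  simp only [re, mul_fst, mul_snd, Quaternion.re_sub, Quaternion.re_add, Quaternion.re_mul,
    Quaternion.imI_mul, Quaternion.imJ_mul, Quaternion.imK_mul,
    Quaternion.imI_sub, Quaternion.imJ_sub, Quaternion.imK_sub,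
    Quaternion.imI_add, Quaternion.imJ_add, Quaternion.imK_add,
    Quaternion.re_star, Quaternion.imI_star, Quaternion.imJ_star, Quaternion.imK_star]
  ring

/- The anonymous-constructor literals in `e` do not carry the type `ℍ` syntactically, so simp
cannot use the `Quaternion` lemmas on them; `e_eq` restates `e` through `quat`. -/
@[simps]
def quat (a b c d : ℝ) : ℍ := ⟨a, b, c, d⟩

lemma e_eq : e = ![((1, 0) : ℍ × ℍ), ((quat 0 1 0 0, 0) : ℍ × ℍ), ((quat 0 0 1 0, 0) : ℍ × ℍ),
    ((quat 0 0 0 1, 0) : ℍ × ℍ), ((0, 1) : ℍ × ℍ), ((0, quat 0 1 0 0) : ℍ × ℍ),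
    ((0, quat 0 0 1 0) : ℍ × ℍ), ((0, quat 0 0 0 1) : ℍ × ℍ)] := rfl

lemma eq_sum_neg_re_mul_smul_of_re_eq_zero (z : Octo) (hz : re z = 0) :
    z = ∑ i ∈ Finset.Icc (1 : Fin 8) 7, (-re (e i * z)) • e i := by
  have hIcc : Finset.Icc (1 : Fin 8) 7 = {1, 2, 3, 4, 5, 6, 7} := by decide
  rw [re] at hz
  rw [hIcc]
  simp (disch := decide) only [Finset.sum_insert, Finset.sum_singleton]
  refine Prod.ext (QuaternionAlgebra.ext ?_ ?_ ?_ ?_) (QuaternionAlgebra.ext ?_ ?_ ?_ ?_) <;>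
    simp only [re, mul_fst, add_fst, add_snd, smul_fst, smul_snd] <;>
    simp [e_eq, hz, Quaternion.re_mul]

namespace IsParaLinear

variable {f : Octo → Octo}

lemma re_map_mul (hf : IsParaLinear f) (p x : Octo) : re (f (p * x)) = re (p * f x) :=
  sub_eq_zero.mp (re_sub _ _ ▸ hf.2 p x)

lemma re_map_assoc (hf : IsParaLinear f) (a p x : Octo) :
    re (f (assoc a p x)) = -re (a * (f (p * x) - p * f x)) :=
  calc re (f (assoc a p x)) = re (f (a * p * x)) - re (f (a * (p * x))) := by
        rw [assoc, hf.1.map_sub, re_sub]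
    _ = re (a * p * f x) - re (a * f (p * x)) := by rw [hf.re_map_mul, hf.re_map_mul]
    _ = -re (a * (f (p * x) - p * f x)) := by rw [re_mul_assoc, re_mul_sub]; ring

end IsParaLinear

end Octo

theorem stmt10 (f : Octo → Octo) (hf : Octo.IsParaLinear f) (p x : Octo) :
    f (p * x) - p * f x
      = ∑ i ∈ Finset.Icc (1 : Fin 8) 7, Octo.re (f (Octo.assoc (Octo.e i) p x)) • Octo.e i := by
  rw [Octo.eq_sum_neg_re_mul_smul_of_re_eq_zero _ (hf.2 p x)]
  exact Finset.sum_congr rfl fun i _ => by rw [hf.re_map_assoc]
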